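/- Let n = 8k with k ≥ 3, let H be the hypergraph of the basic construction, and fix j̃ ∈ {0,...,n/8−1} with associated group G_{j̃} = {e_j, e_{j+1}, e_{j+2}, e_{j+3}} (j = 4j̃+1). Then there is no hyperedge e_z of H satisfying both {8j̃+1, 8j̃+2} ∩ e_z ≠ ∅ and {8j̃+5, 8j̃+6} ∩ e_z ≠ ∅ (vertices mod n). -/

import Mathlib

/-! Reduce vertices mod 8, which is possible because `8 ∣ n`. Every hyperedge of the basic
construction consists of vertices `8s + c`, so its residues do not depend on `s`: those of `eA`
and `eB` lie in `{0, 1, 2, 3, 4, 7}`, those of `eC` and `eD` in `{0, 3, 4, 5, 6, 7}`. Hence `eA`,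
`eB` miss `{8t + 5, 8t + 6}` (residues `{5, 6}`) and `eC`, `eD` miss `{8t + 1, 8t + 2}`
(residues `{1, 2}`). -/

/-- Edge set of the edge intersection hypergraph of a (set-of-hyperedges) hypergraph
on vertex set `ZMod n`. -/
def EIset {n : ℕ} (E : Set (Finset (ZMod n))) : Set (Finset (ZMod n)) :=
  { s | ∃ e₁ ∈ E, ∃ e₂ ∈ E, e₁ ≠ e₂ ∧ s = e₁ ∩ e₂ ∧ 2 ≤ s.card }

/-- Edge set of the edge intersection hypergraph, for a finite family of hyperedges. -/
def EIsetF {n : ℕ} (E : Finset (Finset (ZMod n))) : Set (Finset (ZMod n)) :=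
  { s | ∃ e₁ ∈ E, ∃ e₂ ∈ E, e₁ ≠ e₂ ∧ s = e₁ ∩ e₂ ∧ 2 ≤ s.card }

/-- The edge set of the cycle `Cₙ` on vertex set `ZMod n`. -/
def cycleEdges (n : ℕ) : Set (Finset (ZMod n)) :=
  { s | ∃ i : ZMod n, s = {i, i + 1} }

/-- The number of edges of `Cₙ` contained in the hyperedge `e`. -/
noncomputable def kval {n : ℕ} (e : Finset (ZMod n)) : ℕ :=
  Set.ncard { s : Finset (ZMod n) | s ∈ cycleEdges n ∧ s ⊆ e }


/-- First hyperedge of the group indexed by \`t\` in the basic construction. -/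
def eA (n t : ℕ) : Finset (ZMod n) :=
  let x : ZMod n := 8 * (t : ZMod n)
  {x + 1, x + 2, x + 3, x + 7, x + 8, x + 9}

def eB (n t : ℕ) : Finset (ZMod n) :=
  let x : ZMod n := 8 * (t : ZMod n)
  {x + 2, x + 3, x + 4, x + 16, x + 17, x + 18}

def eC (n t : ℕ) : Finset (ZMod n) :=
  let x : ZMod n := 8 * (t : ZMod n)
  {x + 3, x + 4, x + 5, x + 13, x + 14, x + 15}

def eD (n t : ℕ) : Finset (ZMod n) :=
  let x : ZMod n := 8 * (t : ZMod n)
  {x + 4, x + 5, x + 6, x - 2, x - 1, x}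

/-- The hyperedge set of the basic construction (case \`l = 0\`, \`n = 8k\`). -/
def basicE (n : ℕ) : Set (Finset (ZMod n)) :=
  { e | ∃ t : ℕ, t < n / 8 ∧ (e = eA n t ∨ e = eB n t ∨ e = eC n t ∨ e = eD n t) }

lemma castHom_eight_mul_natCast {n : ℕ} (h : 8 ∣ n) (s : ℕ) :
    ZMod.castHom h (ZMod 8) (8 * (s : ZMod n)) = 0 := by
  rw [map_mul, map_ofNat, show (8 : ZMod 8) = 0 from rfl, zero_mul]

lemma disjoint_hyperedges_of_dvd {n : ℕ} (h : 8 ∣ n) (s t : ℕ) :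
    Disjoint {8 * (t : ZMod n) + 5, 8 * (t : ZMod n) + 6} (eA n s) ∧
    Disjoint {8 * (t : ZMod n) + 5, 8 * (t : ZMod n) + 6} (eB n s) ∧
    Disjoint {8 * (t : ZMod n) + 1, 8 * (t : ZMod n) + 2} (eC n s) ∧
    Disjoint {8 * (t : ZMod n) + 1, 8 * (t : ZMod n) + 2} (eD n s) := by
  refine ⟨?_, ?_, ?_, ?_⟩ <;> apply Disjoint.of_image_finset (f := ZMod.castHom h (ZMod 8)) <;>
    simp only [eA, eB, eC, eD, Finset.image_insert, Finset.image_singleton, map_add, map_sub,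
      castHom_eight_mul_natCast, map_one, map_ofNat, zero_add, zero_sub] <;>
    decide

theorem stmt17_general (n k : ℕ) (hn : n = 8 * k) (t : ℕ) :
    ¬ ∃ e ∈ basicE n,
        (({8 * (t : ZMod n) + 1, 8 * (t : ZMod n) + 2} : Finset (ZMod n)) ∩ e).Nonempty ∧
        (({8 * (t : ZMod n) + 5, 8 * (t : ZMod n) + 6} : Finset (ZMod n)) ∩ e).Nonempty := by
  rintro ⟨e, ⟨s, -, he⟩, h12, h56⟩
  obtain ⟨hA, hB, hC, hD⟩ := disjoint_hyperedges_of_dvd ⟨k, hn⟩ s t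
  rcases he with rfl | rfl | rfl | rfl
  · exact Finset.not_disjoint_iff_nonempty_inter.mpr h56 hA
  · exact Finset.not_disjoint_iff_nonempty_inter.mpr h56 hB
  · exact Finset.not_disjoint_iff_nonempty_inter.mpr h12 hC
  · exact Finset.not_disjoint_iff_nonempty_inter.mpr h12 hD

theorem stmt17 (n k : ℕ) (hk : 3 ≤ k) (hn : n = 8 * k) (t : ℕ) (ht : t < n / 8) :
    ¬ ∃ e ∈ basicE n,
        (({8 * (t : ZMod n) + 1, 8 * (t : ZMod n) + 2} : Finset (ZMod n)) ∩ e).Nonempty ∧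
        (({8 * (t : ZMod n) + 5, 8 * (t : ZMod n) + 6} : Finset (ZMod n)) ∩ e).Nonempty :=
  stmt17_general n k hn t
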